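/- Let 𝒳 ⊆ ℝ^n be a nonempty convex set, α, μ > 0, G, M ≥ 0, v ≥ 0. Let f : ℝ^n → ℝ be convex and differentiable at x₀ ∈ 𝒳 with ‖∇f(x₀)‖ ≤ G, let λ ∈ ℝ^m with λ ≥ 0, let g, g' : ℝ^n → ℝ^m with the components of g convex and ‖[g'(x) − g(x)]^+‖ ≤ v for all x ∈ 𝒳, let x⁺ minimize ⟨∇f(x₀), x − x₀⟩ + ⟨λ, g(x)⟩ + ‖x − x₀‖²/(2α) over 𝒳 with ‖g'(x⁺)‖ ≤ M, let x* ∈ 𝒳 satisfy g(x*) ≤ 0, and set λ' := [λ + μ·g'(x⁺)]^+. Then (‖λ'‖² − ‖λ‖²)/(2μ) + f(x₀) ≤ f(x*) + (‖x* − x₀‖² − ‖x* − x⁺‖²)/(2α) + ‖λ‖·v + μ·M²/2 + α·G²/2. -/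

import Mathlib

open scoped RealInnerProductSpace

/-- Entrywise positive projection on `ℝ^m`. -/
noncomputable def posProj {m : ℕ} (v : EuclideanSpace ℝ (Fin m)) :
    EuclideanSpace ℝ (Fin m) := WithLp.toLp 2 (fun i => max (v i) 0)

/-!
The bound is a sum of elementary estimates. Projection onto the nonnegative orthant does not
increase norms, so the drift `(‖λ'‖² - ‖λ‖²)/(2μ)` is at most `⟪λ, g'(x⁺)⟫ + μM²/2`, and replacing
`g'` by `g` costs at most `‖λ‖ v` because `λ ≥ 0`. The proximal objective is `1/α`-strongly
convex, so its minimiser `x⁺` undercuts its value at `x*` by `‖x* - x⁺‖²/(2α)`. Feasibility gives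
`⟪λ, g(x*)⟫ ≤ 0`, convexity of `f` gives `⟪∇f(x₀), x* - x₀⟫ ≤ f(x*) - f(x₀)`, and Young's
inequality absorbs the remaining `-⟪∇f(x₀), x⁺ - x₀⟫ - ‖x⁺ - x₀‖²/(2α)` into `αG²/2`.
-/

open Set Filter Topology

section Convexity

variable {E : Type*} [NormedAddCommGroup E]

theorem ConvexOn.le_sub_of_hasFDerivAt [NormedSpace ℝ E] {s : Set E} {f : E → ℝ}
    {f' : E →L[ℝ] ℝ} {x y : E} (hf : ConvexOn ℝ s f) (hx : x ∈ s) (hy : y ∈ s)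
    (hd : HasFDerivAt f f' x) : f' (y - x) ≤ f y - f x := by
  set L := AffineMap.lineMap (k := ℝ) x y
  have hL : HasDerivAt L (y - x) 0 := AffineMap.hasDerivAt_lineMap
  have hd' : HasDerivAt (f ∘ L) (f' (y - x)) 0 := by
    rw [← AffineMap.lineMap_apply_zero (k := ℝ) x y] at hd
    exact hd.comp_hasDerivAt 0 hL
  have hslope := (hf.comp_affineMap L).le_slope_of_hasDerivAt (x := 0) (y := 1)
    (by simpa [L] using hx) (by simpa [L] using hy) one_pos hd'
  simpa [slope_def_field, L] using hslope

theorem ConvexOn.inner_gradient_sub_le [InnerProductSpace ℝ E] [CompleteSpace E] {s : Set E}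
    {f : E → ℝ} {x y : E} (hf : ConvexOn ℝ s f) (hx : x ∈ s) (hy : y ∈ s)
    (hd : DifferentiableAt ℝ f x) : ⟪gradient f x, y - x⟫ ≤ f y - f x := by
  rw [inner_gradient_left]
  exact hf.le_sub_of_hasFDerivAt hx hy hd.hasFDerivAt

theorem StrongConvexOn.add_sq_norm_sub_le_of_isMinOn [NormedSpace ℝ E] {s : Set E} {f : E → ℝ}
    {m : ℝ} {x y : E} (hf : StrongConvexOn s m f) (hmin : IsMinOn f s x) (hx : x ∈ s)
    (hy : y ∈ s) : f x + m / 2 * ‖y - x‖ ^ 2 ≤ f y := by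
  have hstep : ∀ t ∈ Ioo (0 : ℝ) 1, f x + (1 - t) * (m / 2 * ‖y - x‖ ^ 2) ≤ f y := by
    rintro t ⟨ht0, ht1⟩
    have hconv := hf.2 hx hy (sub_nonneg.2 ht1.le) ht0.le (sub_add_cancel 1 t)
    have hle := hmin (hf.1 hx hy (sub_nonneg.2 ht1.le) ht0.le (sub_add_cancel 1 t))
    rw [norm_sub_rev] at hconv
    simp only [smul_eq_mul, mem_ofPred_eq] at hconv hle
    have : t * (f x + (1 - t) * (m / 2 * ‖y - x‖ ^ 2)) ≤ t * f y := by linarith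
    exact le_of_mul_le_mul_left this ht0
  have hlim : Tendsto (fun t : ℝ => f x + (1 - t) * (m / 2 * ‖y - x‖ ^ 2)) (𝓝[>] 0)
      (𝓝 (f x + m / 2 * ‖y - x‖ ^ 2)) := by
    have : Continuous (fun t : ℝ => f x + (1 - t) * (m / 2 * ‖y - x‖ ^ 2)) := by fun_prop
    simpa using (this.tendsto 0).mono_left nhdsWithin_le_nhds
  exact le_of_tendsto hlim (eventually_of_mem (Ioo_mem_nhdsGT one_pos) hstep)

end Convexity

section Proximal

variable {E : Type*} [NormedAddCommGroup E] [InnerProductSpace ℝ E]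

theorem ConvexOn.strongConvexOn_add_sq_norm_sub_div {s : Set E} {φ : E → ℝ}
    (hφ : ConvexOn ℝ s φ) (x₀ : E) {α : ℝ} (hα : 0 < α) :
    StrongConvexOn s α⁻¹ fun z => φ z + ‖z - x₀‖ ^ 2 / (2 * α) := by
  rw [strongConvexOn_iff_convex]
  have hlin : ConvexOn ℝ s fun z => -(α⁻¹ • innerₛₗ ℝ x₀) z :=
    (-(α⁻¹ • innerₛₗ ℝ x₀)).convexOn hφ.1
  refine ((hφ.add hlin).add_const (‖x₀‖ ^ 2 / (2 * α))).congr fun z _ => ?_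
  simp only [Pi.add_apply, LinearMap.smul_apply, innerₛₗ_apply_apply,
    smul_eq_mul, norm_sub_sq_real, real_inner_comm z x₀]
  field_simp
  ring

theorem proximal_three_point {s : Set E} {φ : E → ℝ} (hφ : ConvexOn ℝ s φ) {α : ℝ}
    (hα : 0 < α) {x₀ x z : E} (hx : x ∈ s) (hz : z ∈ s)
    (hmin : ∀ y ∈ s, φ x + ‖x - x₀‖ ^ 2 / (2 * α) ≤ φ y + ‖y - x₀‖ ^ 2 / (2 * α)) :
    φ x + ‖x - x₀‖ ^ 2 / (2 * α) + ‖z - x‖ ^ 2 / (2 * α) ≤ φ z + ‖z - x₀‖ ^ 2 / (2 * α) := by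
  have h := (hφ.strongConvexOn_add_sq_norm_sub_div x₀ hα).add_sq_norm_sub_le_of_isMinOn
    hmin hx hz
  convert h using 2
  field_simp

theorem neg_real_inner_le_young {α : ℝ} (hα : 0 < α) (q d : E) :
    -⟪q, d⟫ ≤ α * ‖q‖ ^ 2 / 2 + ‖d‖ ^ 2 / (2 * α) := by
  have h : 0 ≤ ‖α • q + d‖ ^ 2 / (2 * α) := by positivity
  rw [norm_add_sq_real, norm_smul, real_inner_smul_left, Real.norm_of_nonneg hα.le] at h
  field_simp at h ⊢
  nlinarith

end Proximal

section Multipliers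

variable {ι : Type*} [Fintype ι]

theorem convexOn_inner_of_nonneg {E : Type*} [AddCommGroup E] [Module ℝ E] {s : Set E}
    (hs : Convex ℝ s) {lam : EuclideanSpace ℝ ι} (hlam : ∀ i, 0 ≤ lam i)
    {g : E → EuclideanSpace ℝ ι} (hg : ∀ i, ConvexOn ℝ s fun x => g x i) :
    ConvexOn ℝ s fun x => ⟪lam, g x⟫ := by
  refine ⟨hs, fun x hx y hy a b ha hb hab => ?_⟩
  simp only [PiLp.inner_apply, RCLike.inner_apply, conj_trivial, smul_eq_mul, Finset.mul_sum,
    ← Finset.sum_add_distrib]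
  refine Finset.sum_le_sum fun i _ => ?_
  have := mul_le_mul_of_nonneg_right ((hg i).2 hx hy ha hb hab) (hlam i)
  simp only [smul_eq_mul] at this
  linarith

theorem inner_nonpos_of_nonneg_of_nonpos {lam w : EuclideanSpace ℝ ι} (hlam : ∀ i, 0 ≤ lam i)
    (hw : ∀ i, w i ≤ 0) : ⟪lam, w⟫ ≤ 0 := by
  simp only [PiLp.inner_apply, RCLike.inner_apply, conj_trivial]
  exact Finset.sum_nonpos fun i _ => mul_nonpos_of_nonpos_of_nonneg (hw i) (hlam i)

end Multipliers

section PosProj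

variable {m : ℕ}

theorem norm_posProj_le (w : EuclideanSpace ℝ (Fin m)) : ‖posProj w‖ ≤ ‖w‖ := by
  rw [EuclideanSpace.norm_eq, EuclideanSpace.norm_eq]
  gcongr with i
  simp only [posProj, PiLp.toLp_apply, Real.norm_eq_abs]
  rw [abs_of_nonneg (le_max_right _ _)]
  exact max_le (le_abs_self _) (abs_nonneg _)

theorem inner_le_inner_posProj {lam : EuclideanSpace ℝ (Fin m)} (hlam : ∀ i, 0 ≤ lam i)
    (w : EuclideanSpace ℝ (Fin m)) : ⟪lam, w⟫ ≤ ⟪lam, posProj w⟫ := by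
  simp only [PiLp.inner_apply, RCLike.inner_apply, conj_trivial, posProj]
  gcongr with i
  · exact hlam i
  · exact le_max_left _ _

theorem inner_le_inner_add_of_norm_posProj_sub_le {lam w w' : EuclideanSpace ℝ (Fin m)}
    (hlam : ∀ i, 0 ≤ lam i) {v : ℝ} (hv : ‖posProj (w' - w)‖ ≤ v) :
    ⟪lam, w'⟫ ≤ ⟪lam, w⟫ + ‖lam‖ * v :=
  calc ⟪lam, w'⟫ = ⟪lam, w⟫ + ⟪lam, w' - w⟫ := by rw [inner_sub_right]; ring
    _ ≤ ⟪lam, w⟫ + ⟪lam, posProj (w' - w)⟫ := by gcongr; exact inner_le_inner_posProj hlam _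
    _ ≤ ⟪lam, w⟫ + ‖lam‖ * ‖posProj (w' - w)‖ := by gcongr; exact real_inner_le_norm _ _
    _ ≤ ⟪lam, w⟫ + ‖lam‖ * v := by gcongr

theorem drift_posProj_add_smul_le (lam w : EuclideanSpace ℝ (Fin m)) {μ M : ℝ} (hμ : 0 < μ)
    (hw : ‖w‖ ≤ M) :
    (‖posProj (lam + μ • w)‖ ^ 2 - ‖lam‖ ^ 2) / (2 * μ) ≤ ⟪lam, w⟫ + μ * M ^ 2 / 2 := by
  have hexp : ‖lam + μ • w‖ ^ 2 = ‖lam‖ ^ 2 + 2 * μ * ⟪lam, w⟫ + μ ^ 2 * ‖w‖ ^ 2 := by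
    rw [norm_add_sq_real, inner_smul_right, norm_smul, Real.norm_of_nonneg hμ.le]
    ring
  have hproj : ‖posProj (lam + μ • w)‖ ^ 2 ≤ ‖lam + μ • w‖ ^ 2 := by
    gcongr; exact norm_posProj_le _
  have hM : ‖w‖ ^ 2 ≤ M ^ 2 := by gcongr
  rw [div_le_iff₀ (by positivity)]
  nlinarith

end PosProj

theorem drift_plus_regret_bound_general {n m : ℕ}
    (X : Set (EuclideanSpace ℝ (Fin n))) (hXconv : Convex ℝ X)
    (α μ G M v : ℝ) (hα : 0 < α) (hμ : 0 < μ)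
    (f : EuclideanSpace ℝ (Fin n) → ℝ) (hfconv : ConvexOn ℝ Set.univ f)
    (x₀ : EuclideanSpace ℝ (Fin n))
    (hfdiff : DifferentiableAt ℝ f x₀) (hgrad : ‖gradient f x₀‖ ≤ G)
    (lam : EuclideanSpace ℝ (Fin m)) (hlam : ∀ i, 0 ≤ lam i)
    (g g' : EuclideanSpace ℝ (Fin n) → EuclideanSpace ℝ (Fin m))
    (hgconv : ∀ i, ConvexOn ℝ Set.univ fun x => g x i)
    (hvar : ∀ x ∈ X, ‖posProj (g' x - g x)‖ ≤ v)
    (xp : EuclideanSpace ℝ (Fin n)) (hxpX : xp ∈ X)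
    (hxpmin : ∀ z ∈ X,
      ⟪gradient f x₀, xp - x₀⟫ + ⟪lam, g xp⟫ + ‖xp - x₀‖ ^ 2 / (2 * α) ≤
        ⟪gradient f x₀, z - x₀⟫ + ⟪lam, g z⟫ + ‖z - x₀‖ ^ 2 / (2 * α))
    (hgM : ‖g' xp‖ ≤ M)
    (xs : EuclideanSpace ℝ (Fin n)) (hxsX : xs ∈ X) (hxsfeas : ∀ i, g xs i ≤ 0)
    (lam' : EuclideanSpace ℝ (Fin m)) (hlam' : lam' = posProj (lam + μ • g' xp)) :
    (‖lam'‖ ^ 2 - ‖lam‖ ^ 2) / (2 * μ) + f x₀ ≤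
      f xs + (‖xs - x₀‖ ^ 2 - ‖xs - xp‖ ^ 2) / (2 * α) + ‖lam‖ * v +
        μ * M ^ 2 / 2 + α * G ^ 2 / 2 := by
  have hφ : ConvexOn ℝ X fun z => ⟪gradient f x₀, z - x₀⟫ + ⟪lam, g z⟫ := by
    refine ConvexOn.add ?_ (convexOn_inner_of_nonneg hXconv hlam fun i =>
      (hgconv i).subset (subset_univ X) hXconv)
    exact (((innerₛₗ ℝ (gradient f x₀)).convexOn hXconv).add_const (-⟪gradient f x₀, x₀⟫)).congr
      fun z _ => by simp only [Pi.add_apply, innerₛₗ_apply_apply, inner_sub_right]; ring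
  have hdrift := drift_posProj_add_smul_le lam (g' xp) hμ hgM
  have hslack := inner_le_inner_add_of_norm_posProj_sub_le hlam (hvar xp hxpX)
  have hprox := proximal_three_point hφ hα hxpX hxsX hxpmin
  have hfeas := inner_nonpos_of_nonneg_of_nonpos hlam hxsfeas
  have hsub := hfconv.inner_gradient_sub_le (mem_univ x₀) (mem_univ xs) hfdiff
  have hyoung := neg_real_inner_le_young hα (gradient f x₀) (xp - x₀)
  have hG : α * ‖gradient f x₀‖ ^ 2 / 2 ≤ α * G ^ 2 / 2 := by gcongr
  rw [hlam', sub_div (‖xs - x₀‖ ^ 2)]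
  linarith

/-- Per-slot drift-plus-regret bound at a MOSP step
(inequality (40) in the proof of Theorem 2). -/
theorem drift_plus_regret_bound {n m : ℕ} (hm : 0 < m)
    (X : Set (EuclideanSpace ℝ (Fin n))) (hXne : X.Nonempty) (hXconv : Convex ℝ X)
    (α μ G M v : ℝ) (hα : 0 < α) (hμ : 0 < μ) (hG : 0 ≤ G) (hM : 0 ≤ M) (hv : 0 ≤ v)
    (f : EuclideanSpace ℝ (Fin n) → ℝ) (hfconv : ConvexOn ℝ Set.univ f)
    (x₀ : EuclideanSpace ℝ (Fin n)) (hx₀ : x₀ ∈ X)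
    (hfdiff : DifferentiableAt ℝ f x₀) (hgrad : ‖gradient f x₀‖ ≤ G)
    (lam : EuclideanSpace ℝ (Fin m)) (hlam : ∀ i, 0 ≤ lam i)
    (g g' : EuclideanSpace ℝ (Fin n) → EuclideanSpace ℝ (Fin m))
    (hgconv : ∀ i, ConvexOn ℝ Set.univ fun x => g x i)
    (hvar : ∀ x ∈ X, ‖posProj (g' x - g x)‖ ≤ v)
    (xp : EuclideanSpace ℝ (Fin n)) (hxpX : xp ∈ X)
    (hxpmin : ∀ z ∈ X,
      ⟪gradient f x₀, xp - x₀⟫ + ⟪lam, g xp⟫ + ‖xp - x₀‖ ^ 2 / (2 * α) ≤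
        ⟪gradient f x₀, z - x₀⟫ + ⟪lam, g z⟫ + ‖z - x₀‖ ^ 2 / (2 * α))
    (hgM : ‖g' xp‖ ≤ M)
    (xs : EuclideanSpace ℝ (Fin n)) (hxsX : xs ∈ X) (hxsfeas : ∀ i, g xs i ≤ 0)
    (lam' : EuclideanSpace ℝ (Fin m)) (hlam' : lam' = posProj (lam + μ • g' xp)) :
    (‖lam'‖ ^ 2 - ‖lam‖ ^ 2) / (2 * μ) + f x₀ ≤
      f xs + (‖xs - x₀‖ ^ 2 - ‖xs - xp‖ ^ 2) / (2 * α) + ‖lam‖ * v +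
        μ * M ^ 2 / 2 + α * G ^ 2 / 2 :=
  drift_plus_regret_bound_general X hXconv α μ G M v hα hμ f hfconv x₀ hfdiff hgrad lam hlam g g'
    hgconv hvar xp hxpX hxpmin hgM xs hxsX hxsfeas lam' hlam'
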